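/- arXiv:1304.7147 — 2 statements merged into one kernel-verified Lean document; each statement's English description precedes it below -/
import Mathlib

section
/- Let l_0,...,l_N be the Lagrange interpolating polynomials on distinct nodes ξ_0 < ξ_1 < ... < ξ_N, and define ε_i(ξ) = -∑_{k=0}^{i-1} dl_k/dξ for i = 1,...,N. Then for all i, j ∈ {1,...,N}, ∫_{ξ_{j-1}}^{ξ_j} ε_i(ξ) dξ = δ_{i,j}. -/
/-
`ε_i` is minus the derivative of `L_i = l_0 + ⋯ + l_{i-1}`, and `L_i(ξ_m) = [m < i]` at the nodes.
By the fundamental theorem of calculus the integral of `ε_i` over `[ξ_{j-1}, ξ_j]` is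
`[j - 1 < i] - [j < i]`, which is `1` exactly when `i = j`.
-/

open Polynomial intervalIntegral

/-- The edge polynomial `ε_i(ξ) = -∑_{k=0}^{i-1} dl_k/dξ`. -/
noncomputable def edgePoly (l : ℕ → Polynomial ℝ) (i : ℕ) : Polynomial ℝ :=
  -∑ k ∈ Finset.range i, Polynomial.derivative (l k)

theorem Polynomial.integral_eval_derivative (p : ℝ[X]) (a b : ℝ) :
    ∫ x in a..b, (derivative p).eval x = p.eval b - p.eval a :=
  integral_eq_sub_of_hasDerivAt (fun x _ => p.hasDerivAt x)
    ((derivative p).continuous.intervalIntegrable a b)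

theorem edgePoly_eq_neg_derivative_sum (l : ℕ → ℝ[X]) (i : ℕ) :
    edgePoly l i = -derivative (∑ k ∈ Finset.range i, l k) := by
  rw [edgePoly, derivative_sum]

theorem integral_eval_edgePoly (l : ℕ → ℝ[X]) (i : ℕ) (a b : ℝ) :
    ∫ x in a..b, (edgePoly l i).eval x =
      (∑ k ∈ Finset.range i, l k).eval a - (∑ k ∈ Finset.range i, l k).eval b := by
  simp only [edgePoly_eq_neg_derivative_sum, eval_neg, intervalIntegral.integral_neg,
    integral_eval_derivative, neg_sub]

theorem eval_sum_range_of_eval_eq_ite {l : ℕ → ℝ[X]} {x : ℝ} {i m : ℕ}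
    (hl : ∀ k < i, (l k).eval x = if k = m then 1 else 0) :
    (∑ k ∈ Finset.range i, l k).eval x = if m < i then 1 else 0 := by
  rw [eval_finsetSum, Finset.sum_congr rfl fun k hk => hl k (Finset.mem_range.mp hk),
    Finset.sum_ite_eq']
  simp only [Finset.mem_range]

theorem edgePoly_integral_delta_general (N : ℕ) (ξ : ℕ → ℝ) (l : ℕ → Polynomial ℝ)
    (hlag : ∀ k m, k ≤ N → m ≤ N → (l k).eval (ξ m) = if k = m then 1 else 0) :
    ∀ i j, 1 ≤ i → i ≤ N → 1 ≤ j → j ≤ N →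
      (∫ x in (ξ (j - 1))..(ξ j), (edgePoly l i).eval x) = if i = j then 1 else 0 := by
  intro i j _ hiN hj1 hjN
  have hnode : ∀ m ≤ N, (∑ k ∈ Finset.range i, l k).eval (ξ m) = if m < i then 1 else 0 :=
    fun m hm => eval_sum_range_of_eval_eq_ite fun k hk => hlag k m (by omega) hm
  rw [integral_eval_edgePoly, hnode (j - 1) (by omega), hnode j hjN]
  split_ifs <;> (try norm_num) <;> omega

/-- For Lagrange interpolating polynomials `l_0, …, l_N` on distinct ordered nodes
`ξ_0 < ξ_1 < ⋯ < ξ_N`, the edge polynomials satisfy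
`∫_{ξ_{j-1}}^{ξ_j} ε_i(ξ) dξ = δ_{i,j}` for all `1 ≤ i, j ≤ N`. -/
theorem edgePoly_integral_delta (N : ℕ) (ξ : ℕ → ℝ) (l : ℕ → Polynomial ℝ)
    (hord : ∀ i j, i < j → j ≤ N → ξ i < ξ j)
    (hdeg : ∀ k, k ≤ N → (l k).natDegree ≤ N)
    (hlag : ∀ k m, k ≤ N → m ≤ N → (l k).eval (ξ m) = if k = m then 1 else 0) :
    ∀ i j, 1 ≤ i → i ≤ N → 1 ≤ j → j ≤ N →
      (∫ x in (ξ (j - 1))..(ξ j), (edgePoly l i).eval x) = if i = j then 1 else 0 :=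
  edgePoly_integral_delta_general N ξ l hlag
end

section
/- With E the 2D discrete divergence incidence matrix as above, the kernel of E restricted to fields vanishing on the boundary (v^x_{0,j} = v^x_{N,j} = v^y_{i,0} = v^y_{i,N} = 0) has dimension (N−1)², equal to the number of interior vertices of the grid, and consists exactly of discrete curls of vertex-based potentials: v^x_{i,j} = ψ_{i,j} − ψ_{i,j−1}, v^y_{i,j} = −(ψ_{i,j} − ψ_{i−1,j}) for a potential ψ on interior vertices. -/
/-!
A divergence-free field `v` with zero boundary flux is the curl of its stream function
`ψ_{i,j} = v^x_{i,1} + ⋯ + v^x_{i,j}`, summed along each vertical grid line: the `x`-fluxes are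
the vertical differences of `ψ` by construction, and induction on `j` with the divergence
equation shows that the `y`-fluxes are minus its horizontal differences. The boundary conditions
on `v` make `ψ` vanish on the boundary, and the curl is injective on such potentials (zero
vertical differences and `ψ_{i,0} = 0` force `ψ = 0`), so the kernel is isomorphic to the space
of functions on the `(N − 1)²` interior vertices.
-/

/-- The space of discrete flux fields on an `N × N` grid: `v^x_{i,j}` for `0 ≤ i ≤ N`,
`1 ≤ j ≤ N` (second index shifted to `Fin N`), and `v^y_{i,j}` for `1 ≤ i ≤ N`,
`0 ≤ j ≤ N` (first index shifted to `Fin N`). -/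
abbrev FluxSpace (N : ℕ) := ((Fin (N + 1) → Fin N → ℝ) × (Fin N → Fin (N + 1) → ℝ))

/-- The discrete divergence (incidence) map:
`(E v)_{i,j} = v^x_{i,j} − v^x_{i−1,j} + v^y_{i,j} − v^y_{i,j−1}`. -/
noncomputable def discDiv (N : ℕ) : FluxSpace N →ₗ[ℝ] (Fin N → Fin N → ℝ) where
  toFun v := fun i j =>
    v.1 i.succ j - v.1 i.castSucc j + v.2 i j.succ - v.2 i j.castSucc
  map_add' := by intro v w; funext i j; simp; ring
  map_smul' := by intro c v; funext i j; simp; ring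

/-- The subspace of flux fields vanishing on the boundary:
`v^x_{0,j} = v^x_{N,j} = 0` and `v^y_{i,0} = v^y_{i,N} = 0`. -/
noncomputable def bdryZero (N : ℕ) : Submodule ℝ (FluxSpace N) where
  carrier := {v | (∀ j, v.1 0 j = 0) ∧ (∀ j, v.1 (Fin.last N) j = 0) ∧
    (∀ i, v.2 i 0 = 0) ∧ (∀ i, v.2 i (Fin.last N) = 0)}
  add_mem' := by
    rintro v w ⟨h1, h2, h3, h4⟩ ⟨g1, g2, g3, g4⟩
    exact ⟨fun j => by simp [h1 j, g1 j], fun j => by simp [h2 j, g2 j],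
      fun i => by simp [h3 i, g3 i], fun i => by simp [h4 i, g4 i]⟩
  zero_mem' := by exact ⟨fun j => rfl, fun j => rfl, fun i => rfl, fun i => rfl⟩
  smul_mem' := by
    rintro c v ⟨h1, h2, h3, h4⟩
    exact ⟨fun j => by simp [h1 j], fun j => by simp [h2 j],
      fun i => by simp [h3 i], fun i => by simp [h4 i]⟩

/-- The discrete curl of a vertex-based potential `ψ` (extended by zero on boundary
vertices): `v^x_{i,j} = ψ_{i,j} − ψ_{i,j−1}`, `v^y_{i,j} = −(ψ_{i,j} − ψ_{i−1,j})`. -/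
noncomputable def discCurl (N : ℕ) (ψ : Fin (N + 1) → Fin (N + 1) → ℝ) : FluxSpace N :=
  (fun i j => ψ i j.succ - ψ i j.castSucc, fun i j => -(ψ i.succ j - ψ i.castSucc j))

open Module

section SupportedOnProd

variable {R M α β : Type*} [Semiring R] [AddCommMonoid M] [Module R M]

def supportedOnProd (s : Set α) (t : Set β) : Submodule R (α → β → M) where
  carrier := {f | ∀ a b, f a b ≠ 0 → a ∈ s ∧ b ∈ t}
  add_mem' {f g} hf hg a b hfg := by
    by_contra h
    exact hfg (by simp [not_imp_comm.mp (hf a b) h, not_imp_comm.mp (hg a b) h])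
  zero_mem' _ _ h := absurd rfl h
  smul_mem' c f hf a b hcf := hf a b fun h => hcf (by simp [h])

theorem mem_supportedOnProd {s : Set α} {t : Set β} {f : α → β → M} :
    f ∈ supportedOnProd (R := R) s t ↔ ∀ a b, f a b ≠ 0 → a ∈ s ∧ b ∈ t :=
  Iff.rfl

open scoped Classical in
noncomputable def supportedOnProdEquiv (s : Set α) (t : Set β) :
    supportedOnProd (R := R) (M := M) s t ≃ₗ[R] (s → t → M) where
  toFun f a b := f.1 a b
  map_add' _ _ := rfl
  map_smul' _ _ := rfl
  invFun g := ⟨fun a b => if h : a ∈ s ∧ b ∈ t then g ⟨a, h.1⟩ ⟨b, h.2⟩ else 0,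
    fun a b hab => by by_contra h; exact hab (dif_neg h)⟩
  left_inv f := by
    ext a b
    by_cases h : a ∈ s ∧ b ∈ t
    · simp [h]
    · simpa [h] using (not_imp_comm.mp (f.2 a b) h).symm
  right_inv g := by
    ext a b
    simp

theorem finrank_supportedOnProd [StrongRankCondition R] (s : Set α) (t : Set β)
    [Fintype s] [Fintype t] :
    finrank R (supportedOnProd (R := R) (M := R) s t) = Fintype.card s * Fintype.card t := by
  rw [(supportedOnProdEquiv s t).finrank_eq, finrank_pi_fintype]
  simp [finrank_fintype_fun_eq_card]

end SupportedOnProd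

theorem Fin.eq_zero_of_apply_zero_of_succ_eq_castSucc {M : Type*} [Zero M] {n : ℕ}
    {g : Fin (n + 1) → M} (h0 : g 0 = 0) (h : ∀ j : Fin n, g j.succ = g j.castSucc) :
    g = 0 := by
  funext j
  induction j using Fin.induction with
  | zero => exact h0
  | succ j ih => rw [h j, ih]; rfl

def gridInterior (N : ℕ) : Finset (Fin (N + 1)) := Finset.Ioo 0 (Fin.last N)

theorem card_gridInterior (N : ℕ) : (gridInterior N).card = N - 1 := by
  simp [gridInterior, Fin.card_Ioo]

theorem mem_gridInterior {N : ℕ} {i : Fin (N + 1)} :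
    i ∈ gridInterior N ↔ i ≠ 0 ∧ i ≠ Fin.last N := by
  rw [gridInterior, Finset.mem_Ioo, Fin.pos_iff_ne_zero, Fin.lt_last_iff_ne_last]

noncomputable def bdryZeroPot (N : ℕ) : Submodule ℝ (Fin (N + 1) → Fin (N + 1) → ℝ) :=
  supportedOnProd (gridInterior N : Set (Fin (N + 1))) (gridInterior N : Set (Fin (N + 1)))

theorem finrank_bdryZeroPot (N : ℕ) : finrank ℝ (bdryZeroPot N) = (N - 1) ^ 2 := by
  rw [bdryZeroPot, finrank_supportedOnProd]
  simp [card_gridInterior, sq]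

theorem mem_bdryZeroPot {N : ℕ} {ψ : Fin (N + 1) → Fin (N + 1) → ℝ} :
    ψ ∈ bdryZeroPot N ↔
      ∀ j, ψ 0 j = 0 ∧ ψ (Fin.last N) j = 0 ∧ ψ j 0 = 0 ∧ ψ j (Fin.last N) = 0 := by
  simp only [bdryZeroPot, mem_supportedOnProd, Finset.mem_coe, mem_gridInterior]
  constructor
  · intro hψ j
    refine ⟨?_, ?_, ?_, ?_⟩ <;> refine not_imp_comm.mp (hψ _ _) ?_ <;> simp
  · intro h i j hij
    refine ⟨⟨?_, ?_⟩, ?_, ?_⟩ <;> rintro rfl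
    exacts [hij (h j).1, hij (h j).2.1, hij (h i).2.2.1, hij (h i).2.2.2]
noncomputable def discCurlₗ (N : ℕ) : (Fin (N + 1) → Fin (N + 1) → ℝ) →ₗ[ℝ] FluxSpace N where
  toFun := discCurl N
  map_add' ψ φ := by ext <;> simp [discCurl] <;> ring
  map_smul' c ψ := by ext <;> simp [discCurl] <;> ring

theorem discDiv_discCurl (N : ℕ) (ψ : Fin (N + 1) → Fin (N + 1) → ℝ) :
    discDiv N (discCurl N ψ) = 0 := by
  funext i j
  simp only [discDiv, discCurl, LinearMap.coe_mk, AddHom.coe_mk, Pi.zero_apply]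
  ring

theorem discCurl_mem_bdryZero {N : ℕ} {ψ : Fin (N + 1) → Fin (N + 1) → ℝ}
    (hψ : ψ ∈ bdryZeroPot N) : discCurl N ψ ∈ bdryZero N := by
  rw [mem_bdryZeroPot] at hψ
  exact ⟨fun j => by simp [discCurl, (hψ _).1], fun j => by simp [discCurl, (hψ _).2.1],
    fun i => by simp [discCurl, (hψ _).2.2.1], fun i => by simp [discCurl, (hψ _).2.2.2]⟩

theorem eq_zero_of_discCurl_eq_zero {N : ℕ} {ψ : Fin (N + 1) → Fin (N + 1) → ℝ}
    (hψ : ∀ i, ψ i 0 = 0) (h : discCurl N ψ = 0) : ψ = 0 := by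
  funext i
  refine Fin.eq_zero_of_apply_zero_of_succ_eq_castSucc (hψ i) fun j => ?_
  exact sub_eq_zero.mp (congrFun (congrFun (congrArg Prod.fst h) i) j)

theorem discCurlₗ_domRestrict_injective (N : ℕ) :
    Function.Injective ((discCurlₗ N).domRestrict (bdryZeroPot N)) := by
  refine (injective_iff_map_eq_zero _).mpr fun ψ h => Subtype.ext ?_
  exact eq_zero_of_discCurl_eq_zero (fun i => ((mem_bdryZeroPot.mp ψ.2) i).2.2.1) h

noncomputable def streamFunction {N : ℕ} (v : FluxSpace N) : Fin (N + 1) → Fin (N + 1) → ℝ :=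
  fun i => Fin.partialSum (v.1 i)

theorem streamFunction_succ {N : ℕ} (v : FluxSpace N) (i : Fin (N + 1)) (j : Fin N) :
    streamFunction v i j.succ = streamFunction v i j.castSucc + v.1 i j :=
  Fin.partialSum_succ _ j

theorem snd_eq_of_discDiv_eq_zero {N : ℕ} {v : FluxSpace N} (hv : ∀ i, v.2 i 0 = 0)
    (hdiv : discDiv N v = 0) (i : Fin N) (j : Fin (N + 1)) :
    v.2 i j = -(streamFunction v i.succ j - streamFunction v i.castSucc j) := by
  induction j using Fin.induction with
  | zero => simp [streamFunction, hv]
  | succ j ih =>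
    have hij := congrFun (congrFun hdiv i) j
    simp only [discDiv, LinearMap.coe_mk, AddHom.coe_mk, Pi.zero_apply] at hij
    rw [streamFunction_succ, streamFunction_succ]
    linarith

theorem discCurl_streamFunction {N : ℕ} {v : FluxSpace N} (hv : ∀ i, v.2 i 0 = 0)
    (hdiv : discDiv N v = 0) : discCurl N (streamFunction v) = v := by
  ext i j
  · simp [discCurl, streamFunction_succ]
  · exact (snd_eq_of_discDiv_eq_zero hv hdiv i j).symm

theorem streamFunction_mem_bdryZeroPot {N : ℕ} {v : FluxSpace N} (hv : v ∈ bdryZero N)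
    (hdiv : discDiv N v = 0) : streamFunction v ∈ bdryZeroPot N := by
  obtain ⟨h0, hlast, h0', hlast'⟩ := hv
  have hrow : ∀ i, (∀ j, v.1 i j = 0) → streamFunction v i = 0 := fun i hi =>
    Fin.eq_zero_of_apply_zero_of_succ_eq_castSucc (Fin.partialSum_zero _) fun j => by
      rw [streamFunction_succ, hi, add_zero]
  have hcol : (fun i => streamFunction v i (Fin.last N)) = 0 := by
    refine Fin.eq_zero_of_apply_zero_of_succ_eq_castSucc (congrFun (hrow 0 h0) _) fun i => ?_
    have := snd_eq_of_discDiv_eq_zero h0' hdiv i (Fin.last N)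
    rw [hlast'] at this
    linarith
  rw [mem_bdryZeroPot]
  exact fun j => ⟨congrFun (hrow 0 h0) j, congrFun (hrow _ hlast) j, Fin.partialSum_zero _,
    congrFun hcol j⟩

theorem bdryZero_inf_ker_discDiv (N : ℕ) :
    bdryZero N ⊓ LinearMap.ker (discDiv N) = (bdryZeroPot N).map (discCurlₗ N) := by
  ext v
  constructor
  · rintro ⟨hv, hdiv⟩
    exact ⟨streamFunction v, streamFunction_mem_bdryZeroPot hv hdiv,
      discCurl_streamFunction hv.2.2.1 hdiv⟩
  · rintro ⟨ψ, hψ, rfl⟩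
    exact ⟨discCurl_mem_bdryZero hψ, discDiv_discCurl N ψ⟩

theorem discDiv_kernel_is_discrete_curls_general (N : ℕ) :
    Module.finrank ℝ ↥(bdryZero N ⊓ LinearMap.ker (discDiv N)) = (N - 1) ^ 2 ∧
      ∀ v : FluxSpace N,
        v ∈ bdryZero N ⊓ LinearMap.ker (discDiv N) ↔
          ∃ ψ : Fin (N + 1) → Fin (N + 1) → ℝ,
            (∀ j, ψ 0 j = 0 ∧ ψ (Fin.last N) j = 0 ∧ ψ j 0 = 0 ∧ ψ j (Fin.last N) = 0) ∧
              v = discCurl N ψ := by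
  rw [bdryZero_inf_ker_discDiv]
  refine ⟨?_, fun v => ?_⟩
  · rw [← LinearMap.range_domRestrict,
      LinearMap.finrank_range_of_inj (discCurlₗ_domRestrict_injective N), finrank_bdryZeroPot]
  · exact Submodule.mem_map.trans (exists_congr fun ψ => and_congr mem_bdryZeroPot eq_comm)

/-- On an `N × N` tensor-product grid, the kernel of the discrete divergence `E`
restricted to flux fields vanishing on the boundary has dimension `(N − 1)²`, the number
of interior vertices, and consists exactly of the discrete curls of potentials `ψ` defined
on interior vertices (extended by zero to boundary vertices). -/
theorem discDiv_kernel_is_discrete_curls (N : ℕ) (hN : 1 ≤ N) :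
    Module.finrank ℝ ↥(bdryZero N ⊓ LinearMap.ker (discDiv N)) = (N - 1) ^ 2 ∧
      ∀ v : FluxSpace N,
        v ∈ bdryZero N ⊓ LinearMap.ker (discDiv N) ↔
          ∃ ψ : Fin (N + 1) → Fin (N + 1) → ℝ,
            (∀ j, ψ 0 j = 0 ∧ ψ (Fin.last N) j = 0 ∧ ψ j 0 = 0 ∧ ψ j (Fin.last N) = 0) ∧
              v = discCurl N ψ :=
  discDiv_kernel_is_discrete_curls_general N
end
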